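/- arXiv:2005.05475 — 2 statements merged into one kernel-verified Lean document; each statement's English description precedes it below -/
import Mathlib

section
/- Assume Dickson's k-tuples conjecture: for every finite family of linear forms f_i(n) = a_i·n + b_i (i = 1,…,k) with positive integers a_i, if for every prime p there exists an integer n such that p does not divide f_1(n)···f_k(n), then there are infinitely many positive integers n for which f_1(n), …, f_k(n) are all prime. Then for every positive integer k there exists m ∈ 𝒱² with A(m) ≥ k; in particular the set of multiplicities {A(m) : m ∈ 𝒱²} is unbounded. -/
open Filter Topology
open scoped Classical

noncomputable section

/-- The multiplicity `A(m)`: the number of positive integers `n` with `φ(n) = m`. -/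
def totA (m : ℕ) : ℕ := Set.ncard {n : ℕ | 0 < n ∧ n.totient = m}

/-- The set of totients `𝒱`. -/
def totV : Set ℕ := {m : ℕ | ∃ n : ℕ, 0 < n ∧ n.totient = m}

/-- The stratum `𝒱^ℓ` of totients congruent to `2^ℓ` mod `2^(ℓ+1)`. -/
def totVl (ℓ : ℕ) : Set ℕ := {m ∈ totV | m % 2 ^ (ℓ + 1) = 2 ^ ℓ}

/-- `U(x)`: the number of elements of `U` not exceeding `x`. -/
def countUpTo (U : Set ℕ) (x : ℝ) : ℕ := Set.ncard {n ∈ U | (n : ℝ) ≤ x}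

/-- `π(x)`: the number of primes not exceeding `x`. -/
def primePi (x : ℝ) : ℕ := Set.ncard {p : ℕ | p.Prime ∧ (p : ℝ) ≤ x}

/-- `S^ℓ(x) = Σ_{m ∈ 𝒱^ℓ, m ≤ x} A(m)`. -/
def totS (ℓ : ℕ) (x : ℝ) : ℕ :=
  ∑ m ∈ Finset.range (⌊x⌋₊ + 1), if m ∈ totVl ℓ then totA m else 0

end

/-!
Take distinct primes `q₁, …, q_k ≡ 3 (mod 4)`, so `q_i - 1 = 2 r_i` with `r_i` odd, and an odd `M`
such that `2 M` is divisible by every prime `p ≤ k`. The forms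
`P_i(n) = 2 M (∏_{j ≠ i} r_j) (2 n + 1) + 1` are admissible: a prime `p ≤ k` divides every slope
while `P_i(n) ≡ 1`, and modulo a larger prime each form has at most one root. Dickson's conjecture
gives a large `n` with all `P_i(n)` prime, and then the `k` distinct numbers `q_i P_i(n)` share the
totient `4 M (∏ r_j) (2 n + 1) ≡ 4 (mod 8)`.
-/

open Finset Function
open scoped Nat

theorem Nat.le_gcd_two_mul_totient_sq (n : ℕ) : n ≤ Nat.gcd 2 n * φ n ^ 2 := by
  induction n using Nat.recOnPosPrimePosCoprime with
  | zero => simp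
  | one => simp
  | prime_pow p a hp ha =>
    rw [Nat.totient_prime_pow hp ha]
    rcases hp.eq_two_or_odd' with rfl | hodd
    · rw [Nat.gcd_eq_left (dvd_pow_self 2 ha.ne')]
      calc 2 ^ a ≤ 2 ^ (2 * (a - 1) + 1) := Nat.pow_le_pow_right two_pos (by omega)
        _ = 2 * (2 ^ (a - 1) * (2 - 1)) ^ 2 := by ring
    · rw [((Nat.coprime_two_left.2 hodd).pow_right a).gcd_eq_one, one_mul]
      have hp3 : 3 ≤ p := by obtain ⟨j, rfl⟩ := hodd; have := hp.two_le; omega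
      calc p ^ a = p ^ (a - 1) * p := by rw [← pow_succ, Nat.sub_add_cancel ha]
        _ ≤ (p ^ (a - 1) * p ^ (a - 1)) * ((p - 1) * (p - 1)) :=
          Nat.mul_le_mul (Nat.le_mul_of_pos_right _ (by positivity))
            (by nlinarith [Nat.sub_add_cancel hp.one_le])
        _ = (p ^ (a - 1) * (p - 1)) ^ 2 := by ring
  | coprime a b _ _ hab iha ihb =>
    rw [Nat.totient_mul hab, Nat.Coprime.gcd_mul 2 hab]
    calc a * b ≤ (Nat.gcd 2 a * φ a ^ 2) * (Nat.gcd 2 b * φ b ^ 2) := Nat.mul_le_mul iha ihb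
      _ = _ := by ring

theorem Nat.finite_setOf_totient_eq (m : ℕ) : {n : ℕ | φ n = m}.Finite := by
  refine (Set.finite_Iic (2 * m ^ 2)).subset fun n hn => ?_
  rw [Set.mem_ofPred_eq] at hn
  calc n ≤ Nat.gcd 2 n * φ n ^ 2 := n.le_gcd_two_mul_totient_sq
    _ ≤ 2 * m ^ 2 := by rw [hn]; exact Nat.mul_le_mul_right _ (Nat.gcd_le_left n two_pos)

theorem card_le_totA {ι : Type*} [Fintype ι] {f : ι → ℕ} (hf : Injective f) {m : ℕ}
    (hpos : ∀ i, 0 < f i) (htot : ∀ i, φ (f i) = m) : Fintype.card ι ≤ totA m := by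
  rw [← Nat.card_eq_fintype_card, ← Set.ncard_range_of_injective hf]
  exact Set.ncard_le_ncard (by rintro _ ⟨i, rfl⟩; exact ⟨hpos i, htot i⟩)
    ((Nat.finite_setOf_totient_eq m).subset fun n hn => hn.2)

theorem injective_mul_of_lt {ι : Type*} {q P : ι → ℕ} (hq : Injective q)
    (hq_prime : ∀ i, (q i).Prime) (hP_prime : ∀ i, (P i).Prime) (hlt : ∀ i j, q i < P j) :
    Injective fun i => q i * P i := by
  intro i j hij
  have hdvd : q i ∣ q j * P j :=
    (show q i * P i = q j * P j from hij) ▸ dvd_mul_right (q i) (P i)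
  rcases (hq_prime i).dvd_mul.1 hdvd with h | h
  · exact hq ((Nat.prime_dvd_prime_iff_eq (hq_prime i) (hq_prime j)).1 h)
  · exact absurd ((Nat.prime_dvd_prime_iff_eq (hq_prime i) (hP_prime j)).1 h) (hlt i j).ne

def IsAdmissible {ι : Type*} [Fintype ι] (a b : ι → ℕ) : Prop :=
  ∀ p : ℕ, p.Prime → ∃ n : ℕ, ¬ p ∣ ∏ i, (a i * n + b i)

def DicksonConjecture : Prop :=
  ∀ k : ℕ, ∀ a b : Fin k → ℕ, (∀ i, 0 < a i) → IsAdmissible a b →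
    {n : ℕ | 0 < n ∧ ∀ i, (a i * n + b i).Prime}.Infinite

-- A form that does not vanish identically mod `p` has at most one root in `ZMod p`.
theorem exists_not_dvd_prod_of_card_lt {ι : Type*} [Fintype ι] {a b : ι → ℕ} {p : ℕ}
    (hp : p.Prime) (hcard : Fintype.card ι < p) (h : ∀ i, ¬ (p ∣ a i ∧ p ∣ b i)) :
    ∃ n : ℕ, ¬ p ∣ ∏ i, (a i * n + b i) := by
  have := Fact.mk hp
  by_contra! hdvd
  have hroot : ∀ z : ZMod p, ∃ i, (a i : ZMod p) * z + b i = 0 := by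
    intro z
    obtain ⟨i, -, hi⟩ := (Prime.dvd_finsetProd_iff hp.prime _).1 (hdvd z.val)
    refine ⟨i, ?_⟩
    simpa using (ZMod.natCast_eq_zero_iff _ p).2 hi
  choose f hf using hroot
  have hf_inj : Injective f := by
    intro z w hzw
    have ha : (a (f z) : ZMod p) ≠ 0 := by
      intro ha
      have hb := hf z
      rw [ha, zero_mul, zero_add] at hb
      exact h (f z) ⟨(ZMod.natCast_eq_zero_iff _ _).1 ha, (ZMod.natCast_eq_zero_iff _ _).1 hb⟩
    have hw := hf w
    rw [← hzw] at hw
    exact mul_left_cancel₀ ha (by linear_combination hf z - hw)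
  have := Fintype.card_le_of_injective f hf_inj
  rw [ZMod.card] at this
  omega

theorem isAdmissible_of_coprime {ι : Type*} [Fintype ι] {a b : ι → ℕ}
    (hcop : ∀ i, (a i).Coprime (b i))
    (hsmall : ∀ p, p.Prime → p ≤ Fintype.card ι → ∀ i, p ∣ a i) : IsAdmissible a b := by
  intro p hp
  rcases le_or_gt p (Fintype.card ι) with hle | hlt
  · refine ⟨0, ?_⟩
    simp only [mul_zero, zero_add, Prime.dvd_finsetProd_iff hp.prime, not_exists, not_and]
    intro i _ hb
    exact hp.ne_one (Nat.eq_one_of_dvd_coprimes (hcop i) (hsmall p hp hle i) hb)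
  · exact exists_not_dvd_prod_of_card_lt hp hlt
      fun i ⟨ha, hb⟩ => hp.ne_one (Nat.eq_one_of_dvd_coprimes (hcop i) ha hb)

theorem exists_odd_forall_prime_le_dvd_two_mul (k : ℕ) :
    ∃ M, Odd M ∧ ∀ p, p.Prime → p ≤ k → p ∣ 2 * M := by
  refine ⟨∏ j ∈ range k, (2 * j + 1),
    prod_induction _ Odd (fun _ _ => Odd.mul) odd_one fun j _ => odd_two_mul_add_one j, ?_⟩
  intro p hp hpk
  rcases hp.eq_two_or_odd' with rfl | ⟨j, rfl⟩
  · exact dvd_mul_right 2 _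
  · exact dvd_mul_of_dvd_right (dvd_prod_of_mem _ (mem_range.2 (by omega))) 2

section FormCoeff

variable {ι : Type*} [Fintype ι] [DecidableEq ι]

def formCoeff (M : ℕ) (q : ι → ℕ) (i : ι) : ℕ :=
  2 * M * ∏ j ∈ univ.erase i, q j / 2

theorem half_mul_formCoeff (M : ℕ) (q : ι → ℕ) (i : ι) :
    q i / 2 * formCoeff M q i = 2 * M * ∏ j, q j / 2 := by
  rw [formCoeff, mul_left_comm, mul_prod_erase univ (fun j => q j / 2) (mem_univ i)]

theorem totient_mul_formCoeff {M : ℕ} {q : ι → ℕ} {i : ι} {n : ℕ}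
    (hq : (q i).Prime) (hq_odd : Odd (q i)) (hP : (formCoeff M q i * (2 * n + 1) + 1).Prime)
    (hne : q i ≠ formCoeff M q i * (2 * n + 1) + 1) :
    φ (q i * (formCoeff M q i * (2 * n + 1) + 1)) = 4 * (M * (∏ j, q j / 2) * (2 * n + 1)) := by
  have hq_sub : q i - 1 = 2 * (q i / 2) := by obtain ⟨r, hr⟩ := hq_odd; omega
  rw [Nat.totient_mul ((Nat.coprime_primes hq hP).2 hne), Nat.totient_prime hq,
    Nat.totient_prime hP, Nat.add_sub_cancel, hq_sub]
  calc 2 * (q i / 2) * (formCoeff M q i * (2 * n + 1))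
      = 2 * (q i / 2 * formCoeff M q i) * (2 * n + 1) := by ring
    _ = 4 * (M * (∏ j, q j / 2) * (2 * n + 1)) := by rw [half_mul_formCoeff]; ring

end FormCoeff

theorem Nat.coprime_two_mul_self_add_one {c : ℕ} (hc : Even c) : (2 * c).Coprime (c + 1) :=
  Nat.Coprime.mul_left (Nat.coprime_two_left.2 hc.add_one)
    (Nat.coprime_self_add_right.2 (Nat.coprime_one_right c))

theorem four_mul_mem_totVl_two {x : ℕ} (hx : Odd x) (h : 4 * x ∈ totV) : 4 * x ∈ totVl 2 :=
  ⟨h, by obtain ⟨t, rfl⟩ := hx; omega⟩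

theorem exists_injective_prime_mod_four_eq_three (k : ℕ) :
    ∃ q : Fin k → ℕ, Injective q ∧ ∀ i, (q i).Prime ∧ q i % 4 = 3 := by
  have hinf := Nat.infinite_setOfPred_prime_and_modEq (q := 4) (a := 3) four_ne_zero (by norm_num)
  let f := hinf.natEmbedding
  exact ⟨fun i => f i, Subtype.val_injective.comp (f.injective.comp Fin.val_injective),
    fun i => (f i).2⟩

theorem exists_mem_totVl_two_le_totA (dickson : DicksonConjecture) {k : ℕ} (hk : 0 < k) :
    ∃ m ∈ totVl 2, k ≤ totA m := by
  obtain ⟨q, hq_inj, hq⟩ := exists_injective_prime_mod_four_eq_three k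
  have hq_odd : ∀ i, Odd (q i) := fun i => Nat.odd_iff.2 (by have := (hq i).2; omega)
  have hr_odd : ∀ i, Odd (q i / 2) := fun i => Nat.odd_iff.2 (by have := (hq i).2; omega)
  obtain ⟨M, hM_odd, hM⟩ := exists_odd_forall_prime_le_dvd_two_mul k
  set c := formCoeff M q
  have hc_pos : ∀ i, 0 < c i := fun i =>
    Nat.mul_pos (Nat.mul_pos two_pos hM_odd.pos) (prod_pos fun j _ => (hr_odd j).pos)
  have hadm : IsAdmissible (fun i => 2 * c i) (fun i => c i + 1) := by
    refine isAdmissible_of_coprime (fun i => ?_) (fun p hp hpk i => ?_)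
    · exact Nat.coprime_two_mul_self_add_one
        ⟨M * ∏ j ∈ univ.erase i, q j / 2, by simp only [c, formCoeff]; ring⟩
    · exact dvd_mul_of_dvd_right ((hM p hp (by simpa using hpk)).trans (dvd_mul_right _ _)) 2
  obtain ⟨n, ⟨-, hP⟩, hn⟩ :=
    (dickson k _ _ (fun i => Nat.mul_pos two_pos (hc_pos i)) hadm).exists_gt (univ.sup q)
  set P := fun i => c i * (2 * n + 1) + 1
  have hP_prime : ∀ i, (P i).Prime := fun i => by
    convert hP i using 1
    ring
  have hqP : ∀ i j, q i < P j := fun i j =>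
    calc q i ≤ univ.sup q := le_sup (mem_univ i)
      _ < n := hn
      _ < c j * (2 * n + 1) + 1 := by nlinarith [hc_pos j]
  have htot : ∀ i, φ (q i * P i) = 4 * (M * (∏ j, q j / 2) * (2 * n + 1)) := fun i =>
    totient_mul_formCoeff (hq i).1 (hq_odd i) (hP_prime i) (hqP i i).ne
  have hpos : ∀ i, 0 < q i * P i := fun i => Nat.mul_pos (hq i).1.pos (hP_prime i).pos
  refine ⟨_, four_mul_mem_totVl_two ?_ ⟨_, hpos ⟨0, hk⟩, htot ⟨0, hk⟩⟩, ?_⟩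
  · exact (hM_odd.mul (prod_induction _ Odd (fun _ _ => Odd.mul) odd_one fun j _ => hr_odd j)).mul
      (odd_two_mul_add_one n)
  · simpa using
      card_le_totA (injective_mul_of_lt hq_inj (fun i => (hq i).1) hP_prime hqP) hpos htot

/-- Dickson's k-tuples conjecture implies that for every positive integer `k`
there is `m ∈ 𝒱²` with `A(m) ≥ k`; in particular `{A(m) : m ∈ 𝒱²}` is unbounded. -/
theorem stmt_8
    (dickson : ∀ k : ℕ, ∀ a b : Fin k → ℕ, (∀ i, 0 < a i) →
      (∀ p : ℕ, p.Prime → ∃ n : ℕ, ¬ p ∣ ∏ i, (a i * n + b i)) →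
      {n : ℕ | 0 < n ∧ ∀ i, (a i * n + b i).Prime}.Infinite) :
    (∀ k : ℕ, 0 < k → ∃ m ∈ totVl 2, k ≤ totA m) ∧
    (∀ N : ℕ, ∃ m ∈ totVl 2, N ≤ totA m) := by
  have h : ∀ k : ℕ, 0 < k → ∃ m ∈ totVl 2, k ≤ totA m :=
    fun _ => exists_mem_totVl_two_le_totA dickson
  refine ⟨h, fun N => ?_⟩
  obtain ⟨m, hm, hle⟩ := h (N + 1) N.succ_pos
  exact ⟨m, hm, N.le_succ.trans hle⟩
end

section
/- For every real number x > 1, every integer ℓ ≥ 1 and every integer n ≥ 1, S^{ℓ+n}(2^n · x) ≥ S^ℓ(x) / 2^n. -/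
open Filter Topology
open scoped Classical

/-!
Everything comes from doubling. If `φ k = m`, then `φ (2k) = 2m` for even `k` and
`φ (4k) = 2m` for odd `k`; both maps are injective, so `A(m) ≤ 2·A(2m)`. Moreover
`m ↦ 2m` sends `𝒱^ℓ ∩ [0, x]` into `𝒱^{ℓ+1} ∩ [0, 2x]`, whence `S^ℓ(x) ≤ 2·S^{ℓ+1}(2x)`,
and `n` iterations give `S^ℓ(x) ≤ 2^n·S^{ℓ+n}(2^n x)`. The fibres of `φ` are finite
because `k ≤ 2·φ(k)²`.
-/

namespace Nat

theorem le_totient_sq_of_odd {t : ℕ} (ht : Odd t) : t ≤ φ t ^ 2 := by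
  induction t using Nat.strong_induction_on with
  | _ t ih =>
  obtain rfl | h1 := eq_or_ne t 1
  · simp
  obtain ⟨p, s, hp, rfl⟩ : ∃ p s, p.Prime ∧ t = p * s :=
    ⟨t.minFac, t / t.minFac, minFac_prime h1, (Nat.mul_div_cancel' (minFac_dvd t)).symm⟩
  obtain ⟨hp_odd, hs_odd⟩ := Nat.odd_mul.mp ht
  have hp3 : 3 ≤ p := by
    have := hp.two_le
    have := Nat.odd_iff.mp hp_odd
    omega
  have hs : s < p * s := by
    have := hs_odd.pos
    nlinarith
  have hp_le : p ≤ (p - 1) ^ 2 := by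
    obtain ⟨q, rfl⟩ := Nat.exists_eq_add_of_le' hp3
    rw [show q + 3 - 1 = q + 2 by omega]
    nlinarith
  calc p * s ≤ p * φ s ^ 2 := by gcongr; exact ih s hs hs_odd
    _ ≤ ((p - 1) * φ s) ^ 2 := by rw [mul_pow]; gcongr
    _ = (φ p * φ s) ^ 2 := by rw [totient_prime hp]
    _ ≤ φ (p * s) ^ 2 := by gcongr; exact totient_super_multiplicative p s

theorem le_two_mul_totient_sq (k : ℕ) : k ≤ 2 * φ k ^ 2 := by
  induction k using Nat.strong_induction_on with
  | _ k ih =>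
  obtain ⟨s, rfl | rfl⟩ := Nat.even_or_odd' k
  · obtain rfl | hs0 := eq_or_ne s 0
    · simp
    rcases Nat.even_or_odd s with hs | hs
    · have := ih s (by omega)
      rw [totient_two_mul_of_even hs]
      nlinarith
    · have := le_totient_sq_of_odd hs
      rw [totient_two_mul_of_odd hs]
      omega
  · have := le_totient_sq_of_odd (odd_two_mul_add_one s)
    omega

theorem finite_setOf_totient_eq_s15 (m : ℕ) : {n : ℕ | 0 < n ∧ φ n = m}.Finite :=
  (Set.finite_Iic (2 * m ^ 2)).subset fun n ⟨_, hn⟩ => hn ▸ le_two_mul_totient_sq n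

theorem two_mul_le_floor_two_mul {R : Type*} [Semiring R] [LinearOrder R]
    [IsStrictOrderedRing R] [FloorSemiring R] {m : ℕ} {x : R} (h : m ≤ ⌊x⌋₊) :
    2 * m ≤ ⌊2 * x⌋₊ := by
  obtain rfl | hm := eq_or_ne m 0
  · simp
  rw [le_floor_iff' (by positivity)]
  have := (le_floor_iff' hm).mp h
  push_cast
  gcongr

end Nat

theorem totA_le_two_mul_totA_two_mul (m : ℕ) : totA m ≤ 2 * totA (2 * m) := by
  set F := {n : ℕ | 0 < n ∧ n.totient = m}
  set G := {n : ℕ | 0 < n ∧ n.totient = 2 * m}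
  have h_even : (F ∩ {n | Even n}).ncard ≤ G.ncard :=
    Set.ncard_le_ncard_of_injOn (2 * ·)
      (fun n ⟨⟨hn, hφ⟩, he⟩ => ⟨by omega, by rw [Nat.totient_two_mul_of_even he, hφ]⟩)
      (fun _ _ _ _ h => by simpa using h) (Nat.finite_setOf_totient_eq_s15 _)
  have h_odd : (F \ {n | Even n}).ncard ≤ G.ncard :=
    Set.ncard_le_ncard_of_injOn (4 * ·)
      (fun n ⟨⟨hn, hφ⟩, ho⟩ => by
        have ho : Odd n := Nat.not_even_iff_odd.mp ho
        refine ⟨by omega, ?_⟩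
        rw [show 4 * n = 2 * (2 * n) by ring, Nat.totient_two_mul_of_even (even_two_mul n),
          Nat.totient_two_mul_of_odd ho, hφ])
      (fun _ _ _ _ h => by simpa using h) (Nat.finite_setOf_totient_eq_s15 _)
  have := Set.ncard_inter_add_ncard_sdiff_eq_ncard F {n | Even n} (Nat.finite_setOf_totient_eq_s15 m)
  change F.ncard ≤ 2 * G.ncard
  omega

theorem two_mul_mem_totV {m : ℕ} (hm : m ∈ totV) : 2 * m ∈ totV := by
  obtain ⟨n, hn, rfl⟩ := hm
  rcases Nat.even_or_odd n with he | ho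
  · exact ⟨2 * n, by omega, Nat.totient_two_mul_of_even he⟩
  · refine ⟨2 * (2 * n), by omega, ?_⟩
    rw [Nat.totient_two_mul_of_even (even_two_mul n), Nat.totient_two_mul_of_odd ho]

theorem two_mul_mem_totVl {m ℓ : ℕ} (hm : m ∈ totVl ℓ) : 2 * m ∈ totVl (ℓ + 1) := by
  refine ⟨two_mul_mem_totV hm.1, ?_⟩
  rw [pow_succ', Nat.mul_mod_mul_left, hm.2, pow_succ']

theorem totS_le_two_mul_totS_two_mul (ℓ : ℕ) (x : ℝ) :
    totS ℓ x ≤ 2 * totS (ℓ + 1) (2 * x) := by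
  set f : ℕ → ℕ := fun m => if m ∈ totVl (ℓ + 1) then totA m else 0
  have h_image : (Finset.range (⌊x⌋₊ + 1)).image (2 * ·) ⊆ Finset.range (⌊2 * x⌋₊ + 1) := by
    simp only [Finset.subset_iff, Finset.mem_image, Finset.mem_range, Nat.lt_succ_iff]
    rintro _ ⟨m, hm, rfl⟩
    exact Nat.two_mul_le_floor_two_mul hm
  calc totS ℓ x ≤ ∑ m ∈ Finset.range (⌊x⌋₊ + 1), 2 * f (2 * m) := by
        refine Finset.sum_le_sum fun m _ => ?_
        split_ifs with hm
        · simpa [f, two_mul_mem_totVl hm] using totA_le_two_mul_totA_two_mul m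
        · exact Nat.zero_le _
    _ = 2 * ∑ m ∈ (Finset.range (⌊x⌋₊ + 1)).image (2 * ·), f m := by
        rw [Finset.sum_image fun a _ b _ h => by simpa using h, Finset.mul_sum]
    _ ≤ 2 * totS (ℓ + 1) (2 * x) := by
        gcongr
        exact Finset.sum_le_sum_of_subset h_image

theorem totS_le_two_pow_mul_totS (ℓ n : ℕ) (x : ℝ) :
    totS ℓ x ≤ 2 ^ n * totS (ℓ + n) (2 ^ n * x) := by
  induction n generalizing ℓ x with
  | zero => simp
  | succ n ih =>
    calc totS ℓ x ≤ 2 * totS (ℓ + 1) (2 * x) := totS_le_two_mul_totS_two_mul ℓ x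
      _ ≤ 2 * (2 ^ n * totS (ℓ + 1 + n) (2 ^ n * (2 * x))) := by gcongr; exact ih _ _
      _ = 2 ^ (n + 1) * totS (ℓ + (n + 1)) (2 ^ (n + 1) * x) := by
        rw [add_assoc, add_comm 1 n, show (2 : ℝ) ^ n * (2 * x) = 2 ^ (n + 1) * x by ring]
        ring

theorem stmt_15_general (x : ℝ) (ℓ : ℕ) (n : ℕ) :
    (totS ℓ x : ℝ) / 2 ^ n ≤ (totS (ℓ + n) (2 ^ n * x) : ℝ) := by
  rw [div_le_iff₀ (by positivity), mul_comm]
  exact_mod_cast totS_le_two_pow_mul_totS ℓ n x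

/-- For every real `x > 1` and integers `ℓ ≥ 1`, `n ≥ 1`,
`S^{ℓ+n}(2^n·x) ≥ S^ℓ(x)/2^n`. -/
theorem stmt_15 (x : ℝ) (hx : 1 < x) (ℓ : ℕ) (hℓ : 1 ≤ ℓ) (n : ℕ) (hn : 1 ≤ n) :
    (totS ℓ x : ℝ) / 2 ^ n ≤ (totS (ℓ + n) (2 ^ n * x) : ℝ) :=
  stmt_15_general x ℓ n
end
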